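/- arXiv:2605.28794 — 2 statements merged into one kernel-verified Lean document; each statement's English description precedes it below -/
import Mathlib

section
/- Let S3 = ⟨r, s | r³ = s² = 1, s*r = r²*s⟩ act on Z/3 by r·k = k+1, s·k = −k. Define the algebra Tube_A with basis {T(g, h, j) : g, h ∈ S3, j ∈ Z/3} and product T(g,h,j)·T(g',h',k) = δ_{h', g⁻¹hg} · δ_{j, g'·k} · T(g*g', h, k). Then the elements P₁ = ½ ∑_{k ∈ Z/3} ∑_{g ∈ Stab(k)} T(g, 1, k) and P_e = ½ ∑_{k ∈ Z/3} ∑_{g ∈ Stab(k)} σ(g) T(g, 1, k), where σ : S3 → {±1} is the sign character and Stab(k) = {1, r^(2k)*s}, satisfy P₁² = P₁, P_e² = P_e, and P₁·P_e = P_e·P₁ = 0. -/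
/-- `S₃`, realized as the dihedral group of order 6. -/
abbrev G := DihedralGroup 3

def ss : G := DihedralGroup.sr 0

/-- The action of `S₃` on `ℤ/3` with `r·k = k+1`, `s·k = -k`. -/
def act : G → ZMod 3 → ZMod 3
  | DihedralGroup.r i, k => k + i
  | DihedralGroup.sr i, k => -k - i

/-- The underlying vector space of the `A`-tube algebra `Tube_A(Hilb(S₃))`:
functions on triples `(g, h, j)`, with `T(g,h,j)` the indicator of `(g,h,j)`. -/
abbrev TubeA := G × G × ZMod 3 → ℂ

/-- Basis vector `T(g,h,j)`. -/
def T (g h : G) (j : ZMod 3) : TubeA := fun p => if p = (g, h, j) then 1 else 0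

/-- The `A`-tube algebra multiplication, determined on basis vectors by
`T(g,h,j)·T(g',h',k) = δ_{h', g⁻¹hg} · δ_{j, g'·k} · T(g*g', h, k)`. -/
noncomputable def tmul (x y : TubeA) : TubeA :=
  fun p => ∑ g : G,
    x (g, p.2.1, act (g⁻¹ * p.1) p.2.2) * y (g⁻¹ * p.1, g⁻¹ * p.2.1 * g, p.2.2)

/-- The stabilizer `Stab(k) = {1, r^(2k)*s}` as a finset. -/
def stabF (k : ZMod 3) : Finset G := {1, DihedralGroup.r (2 * k) * ss}

/-- The sign character `σ` of `S₃`: `σ(rⁱ) = 1`, `σ(rⁱs) = -1`. -/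
def sgn : G → ℂ
  | DihedralGroup.r _ => 1
  | DihedralGroup.sr _ => -1

/-- `P₁ = ½ ∑_k ∑_{g ∈ Stab(k)} T(g,1,k)`. -/
noncomputable def P1 : TubeA :=
  (2 : ℂ)⁻¹ • ∑ k : ZMod 3, ∑ g ∈ stabF k, T g 1 k

/-- `P_e = ½ ∑_k ∑_{g ∈ Stab(k)} σ(g) T(g,1,k)`. -/
noncomputable def Pe : TubeA :=
  (2 : ℂ)⁻¹ • ∑ k : ZMod 3, ∑ g ∈ stabF k, sgn g • T g 1 k

/-!
On the flux-free sector `h = 1`, right multiplication by `T(u, 1, j)` with `u` in the stabilizer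
of `j` is right translation by `u⁻¹`. Hence the elements `∑ₖ T(u k, 1, k)` with `u k ∈ Stab(k)`
multiply like the pointwise products of the sections `u`. For `E = ∑ₖ T(1, 1, k)` and
`S = ∑ₖ T(sₖ, 1, k)`, where `sₖ = r^(2k) s` is the reflection fixing `k`, this gives `E² = E`,
`ES = SE = S` and `S² = E`: they span a copy of `ℂ[ℤ/2]`, in which `P₁ = (E + S)/2` and
`P_e = (E - S)/2` are the two character idempotents.
-/

noncomputable def sectionT (u : ZMod 3 → G) : TubeA := ∑ k, T (u k) 1 k

lemma sectionT_apply (u : ZMod 3 → G) (g h : G) (j : ZMod 3) :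
    sectionT u (g, h, j) = if g = u j ∧ h = 1 then 1 else 0 := by
  simp only [sectionT, Finset.sum_apply, T, Prod.mk.injEq]
  rw [Finset.sum_eq_single j (fun k _ hk => if_neg fun h => hk h.2.2.symm) (by simp)]
  simp only [and_true]

lemma tmul_sectionT_apply (x : TubeA) {u : ZMod 3 → G} (hu : ∀ j, act (u j) j = j)
    (g h : G) (j : ZMod 3) :
    tmul x (sectionT u) (g, h, j) = if h = 1 then x (g * (u j)⁻¹, 1, j) else 0 := by
  have hsupp (g' : G) :
      (g'⁻¹ * g = u j ∧ g'⁻¹ * h * g' = 1) ↔ (g' = g * (u j)⁻¹ ∧ h = 1) := by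
    refine and_congr ?_ (by simpa using conj_eq_one_iff (a := g'⁻¹) (b := h))
    rw [inv_mul_eq_iff_eq_mul, eq_mul_inv_iff_mul_eq, eq_comm]
  simp only [tmul, sectionT_apply, hsupp, mul_ite, mul_one, mul_zero, ite_and]
  split_ifs with hh
  · subst hh
    simp [hu]
  · simp

lemma tmul_sectionT (v : ZMod 3 → G) {u : ZMod 3 → G} (hu : ∀ j, act (u j) j = j) :
    tmul (sectionT v) (sectionT u) = sectionT (v * u) := by
  funext ⟨g, h, j⟩
  simp only [tmul_sectionT_apply _ hu, sectionT_apply, Pi.mul_apply, ← mul_inv_eq_iff_eq_mul]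
  by_cases hh : h = 1 <;> simp [hh]

lemma tmul_add_left (x y z : TubeA) : tmul (x + y) z = tmul x z + tmul y z := by
  funext p
  simp only [tmul, Pi.add_apply, add_mul, Finset.sum_add_distrib]

lemma tmul_add_right (x y z : TubeA) : tmul x (y + z) = tmul x y + tmul x z := by
  funext p
  simp only [tmul, Pi.add_apply, mul_add, Finset.sum_add_distrib]

lemma tmul_smul_left (c : ℂ) (x y : TubeA) : tmul (c • x) y = c • tmul x y := by
  funext p
  simp only [tmul, Pi.smul_apply, smul_eq_mul, mul_assoc, Finset.mul_sum]

lemma tmul_smul_right (c : ℂ) (x y : TubeA) : tmul x (c • y) = c • tmul x y := by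
  funext p
  simp only [tmul, Pi.smul_apply, smul_eq_mul, mul_left_comm, Finset.mul_sum]

lemma act_one (j : ZMod 3) : act 1 j = j := add_zero j

lemma act_sr_self (j : ZMod 3) : act (.sr j) j = j := by
  revert j; decide

lemma sr_mul_self : (DihedralGroup.sr : ZMod 3 → G) * DihedralGroup.sr = 1 := by
  funext j
  simp [DihedralGroup.sr_mul_sr]

lemma sum_stabF {M : Type*} [AddCommMonoid M] (f : G → M) (k : ZMod 3) :
    ∑ g ∈ stabF k, f g = f 1 + f (.sr k) := by
  have hstab : DihedralGroup.r (2 * k) * ss = .sr k := by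
    rw [ss, DihedralGroup.r_mul_sr]
    congr 1
    revert k; decide
  rw [stabF, hstab, Finset.sum_pair (by rintro ⟨⟩)]

noncomputable def stabHalf (a : ℂ) : TubeA :=
  (2 : ℂ)⁻¹ • (sectionT 1 + a • sectionT DihedralGroup.sr)

lemma tmul_stabHalf (a b : ℂ) :
    tmul (stabHalf a) (stabHalf b) =
      (4 : ℂ)⁻¹ • ((1 + a * b) • sectionT 1 + (a + b) • sectionT DihedralGroup.sr) := by
  have hE : tmul (sectionT 1) (sectionT 1) = sectionT 1 := by
    simpa using tmul_sectionT 1 (u := 1) act_one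
  have hES : tmul (sectionT 1) (sectionT .sr) = sectionT .sr := by
    simpa using tmul_sectionT 1 act_sr_self
  have hSE : tmul (sectionT .sr) (sectionT 1) = sectionT .sr := by
    simpa using tmul_sectionT .sr (u := 1) act_one
  have hS : tmul (sectionT .sr) (sectionT .sr) = sectionT 1 := by
    rw [tmul_sectionT _ act_sr_self, sr_mul_self]
  simp only [stabHalf, tmul_add_left, tmul_add_right, tmul_smul_left, tmul_smul_right,
    hE, hES, hSE, hS]
  module

lemma stabHalf_idem {a : ℂ} (ha : a * a = 1) : tmul (stabHalf a) (stabHalf a) = stabHalf a := by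
  rw [tmul_stabHalf, ha, stabHalf]
  module

lemma stabHalf_orth {a b : ℂ} (hab : a * b = -1) (hsum : a + b = 0) :
    tmul (stabHalf a) (stabHalf b) = 0 := by
  rw [tmul_stabHalf, hab, hsum]
  module

lemma P1_eq_stabHalf : P1 = stabHalf 1 := by
  simp only [P1, stabHalf, sum_stabF, Finset.sum_add_distrib, one_smul, sectionT, Pi.one_apply]

lemma Pe_eq_stabHalf : Pe = stabHalf (-1) := by
  simp only [Pe, stabHalf, sum_stabF, Finset.sum_add_distrib, sectionT, Pi.one_apply,
    show sgn 1 = 1 from rfl, fun k => show sgn (.sr k) = -1 from rfl, one_smul, Finset.smul_sum]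

/-- The toric code idempotents `P₁` and `P_e` in the `A`-tube algebra of
`Hilb(S₃)` are orthogonal idempotents. -/
theorem tubeA_toric_idempotents :
    tmul P1 P1 = P1 ∧ tmul Pe Pe = Pe ∧ tmul P1 Pe = 0 ∧ tmul Pe P1 = 0 := by
  rw [P1_eq_stabHalf, Pe_eq_stabHalf]
  exact ⟨stabHalf_idem (by norm_num), stabHalf_idem (by norm_num),
    stabHalf_orth (by norm_num) (by norm_num), stabHalf_orth (by norm_num) (by norm_num)⟩
end

section
/- Let S3 = ⟨r, s | r³ = s² = 1, s*r = r²*s⟩ act on Z/3 by r·k = k+1, s·k = −k, and let Stab(k) = {1, r^(2k)*s}. Fix two functions c⁺, c⁻ : S3 → ℂ with c⁺(g) = 1 and c⁻(g) = σ(g) (the sign character). Then for each choice a, b ∈ {+,−} and each pair (i,j) ∈ (Z/3)², and for any m ∈ S3 with m·j ≠ i, the element w(i,j) = ∑_{g ∈ Stab(i)} ∑_{g' ∈ Stab(j)} c^a(g)·c^b(g')·e(g*m*g') of the free vector space ℂ^(S3) is nonzero and independent of the choice of such m up to nonzero scalar; moreover the nine elements {w(i,j) ⊗ e(i) ⊗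 e(j) : i, j ∈ Z/3} are linearly independent in ℂ^(S3) ⊗ ℂ^(Z/3) ⊗ ℂ^(Z/3). -/
open scoped TensorProduct

/-- The characters `c⁺ = 1` and `c⁻ = σ`, indexed by a Boolean. -/
def c : Bool → G → ℂ := fun b g => if b then sgn g else 1

/-- The standard basis vector of `ℂ^S₃`. -/
def e (x : G) : G → ℂ := fun y => if y = x then 1 else 0

/-- The standard basis vector of `ℂ^(ℤ/3)`. -/
def e' (k : ZMod 3) : ZMod 3 → ℂ := fun j => if j = k then 1 else 0

/-- `w(i,j) = ∑_{g ∈ Stab(i)} ∑_{g' ∈ Stab(j)} cᵃ(g)·cᵇ(g')·e(g*m*g')`. -/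
noncomputable def w (a b : Bool) (i j : ZMod 3) (m : G) : G → ℂ :=
  ∑ g ∈ stabF i, ∑ g' ∈ stabF j, (c a g * c b g') • e (g * m * g')

/- ### Auxiliary machinery -/

def t (i : ZMod 3) : G := DihedralGroup.r (2*i) * ss

def ε (a : Bool) : ℂ := if a then -1 else 1

lemma eps_ne (a : Bool) : ε a ≠ 0 := by cases a <;> norm_num [ε]

lemma eps_sq (a : Bool) : ε a * ε a = 1 := by cases a <;> norm_num [ε]

lemma one_ne_t : ∀ i : ZMod 3, (1 : G) ≠ t i := by decide

lemma t_sq : ∀ i : ZMod 3, t i * t i = 1 := by decide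

lemma c_one (a : Bool) : c a 1 = 1 := by cases a <;> rfl

lemma c_t (a : Bool) (i : ZMod 3) : c a (t i) = ε a := by cases a <;> rfl

lemma hne1 : ∀ (j : ZMod 3) (m : G), m * t j ≠ m := by decide
lemma hne2 : ∀ (i : ZMod 3) (m : G), t i * m ≠ m := by decide
lemma hne3 : ∀ (i j : ZMod 3) (m : G), act m j ≠ i → t i * m * t j ≠ m := by decide
lemma hcoset : ∀ (i j : ZMod 3) (m m' : G), act m j ≠ i → act m' j ≠ i →
    (m' = m ∨ m' = t i * m ∨ m' = m * t j ∨ m' = t i * m * t j) := by decide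

lemma stabF_eq (k : ZMod 3) : stabF k = {1, t k} := rfl

lemma w_eval (a b : Bool) (i j : ZMod 3) (m : G) :
    w a b i j m = fun x =>
      e m x + ε b * e (m * t j) x + ε a * e (t i * m) x
        + ε a * ε b * e (t i * m * t j) x := by
  funext x
  simp only [w, stabF_eq, Finset.sum_pair (one_ne_t i), Finset.sum_pair (one_ne_t j),
    c_one, c_t, one_mul, mul_one]
  simp [Pi.add_apply, Pi.smul_apply, smul_eq_mul]
  ring

lemma w_self (a b : Bool) (i j : ZMod 3) (m : G) (h : act m j ≠ i) :
    w a b i j m m = 1 := by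
  rw [w_eval]
  simp only [e, if_pos rfl, if_neg (Ne.symm (hne1 j m)), if_neg (Ne.symm (hne2 i m)),
    if_neg (Ne.symm (hne3 i j m h)), if_true]
  ring

noncomputable def φ (x : G) (q1 q2 : ZMod 3) :
    (G → ℂ) ⊗[ℂ] ((ZMod 3 → ℂ) ⊗[ℂ] (ZMod 3 → ℂ)) →ₗ[ℂ] ℂ :=
  (TensorProduct.lid ℂ ℂ).toLinearMap ∘ₗ
    TensorProduct.map (LinearMap.proj x)
      ((TensorProduct.lid ℂ ℂ).toLinearMap ∘ₗ
        TensorProduct.map (LinearMap.proj q1) (LinearMap.proj q2))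

lemma φ_tmul (x : G) (q1 q2 : ZMod 3) (v : G → ℂ) (u1 u2 : ZMod 3 → ℂ) :
    φ x q1 q2 (v ⊗ₜ[ℂ] (u1 ⊗ₜ[ℂ] u2)) = v x * (u1 q1 * u2 q2) := by
  simp [φ, TensorProduct.lid_tmul, smul_eq_mul]

set_option maxHeartbeats 1000000 in
set_option synthInstance.maxHeartbeats 400000 in
/-- For each choice of characters `a, b` and each `(i,j)`, and any `m` with
`m·j ≠ i`, the vector `w(i,j)` is nonzero and independent of the choice of
such `m` up to a nonzero scalar; moreover the nine vectors
`w(i,j) ⊗ e i ⊗ e j` are linearly independent. -/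
theorem s3_condensed_symmetry_vectors (a b : Bool) :
    (∀ (i j : ZMod 3) (m : G), act m j ≠ i → w a b i j m ≠ 0) ∧
    (∀ (i j : ZMod 3) (m m' : G), act m j ≠ i → act m' j ≠ i →
      ∃ γ : ℂ, γ ≠ 0 ∧ w a b i j m' = γ • w a b i j m) ∧
    (∀ m : ZMod 3 → ZMod 3 → G, (∀ i j, act (m i j) j ≠ i) →
      LinearIndependent ℂ (fun p : ZMod 3 × ZMod 3 =>
        (w a b p.1 p.2 (m p.1 p.2) ⊗ₜ[ℂ] (e' p.1 ⊗ₜ[ℂ] e' p.2) :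
          (G → ℂ) ⊗[ℂ] ((ZMod 3 → ℂ) ⊗[ℂ] (ZMod 3 → ℂ))))) := by
  refine ⟨?_, ?_, ?_⟩
  · intro i j m h hw
    have h1 := congrFun hw m
    rw [w_self a b i j m h] at h1
    exact one_ne_zero h1
  · intro i j m m' hm hm'
    rcases hcoset i j m m' hm hm' with h | h | h | h
    · exact ⟨1, one_ne_zero, by rw [h, one_smul]⟩
    · refine ⟨ε a, eps_ne a, ?_⟩
      subst h
      have h1 : t i * (t i * m) = m := by rw [← mul_assoc, t_sq, one_mul]
      funext x
      rw [Pi.smul_apply, smul_eq_mul, w_eval, w_eval]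
      simp only [h1]
      linear_combination (-(e (t i * m) x) - ε b * e (t i * m * t j) x) * eps_sq a
    · refine ⟨ε b, eps_ne b, ?_⟩
      subst h
      have h1 : m * t j * t j = m := by rw [mul_assoc, t_sq, mul_one]
      have h2 : t i * (m * t j) * t j = t i * m := by
        rw [mul_assoc, mul_assoc, t_sq, mul_one]
      have h3 : t i * (m * t j) = t i * m * t j := (mul_assoc _ _ _).symm
      have h4 : t i * m * t j * t j = t i * m := by rw [mul_assoc, t_sq, mul_one]
      funext x
      rw [Pi.smul_apply, smul_eq_mul, w_eval, w_eval]
      simp only [h1, h2, h3, h4]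
      linear_combination (-(e (m * t j) x) - ε a * e (t i * m * t j) x) * eps_sq b
    · refine ⟨ε a * ε b, mul_ne_zero (eps_ne a) (eps_ne b), ?_⟩
      subst h
      have h1 : t i * m * t j * t j = t i * m := by rw [mul_assoc, t_sq, mul_one]
      have h2 : t i * (t i * m * t j) = m * t j := by
        rw [← mul_assoc, ← mul_assoc, t_sq, one_mul]
      have h3 : t i * (t i * m * t j) * t j = m := by
        rw [h2, mul_assoc, t_sq, mul_one]
      have h4 : m * t j * t j = m := by rw [mul_assoc, t_sq, mul_one]
      funext x
      rw [Pi.smul_apply, smul_eq_mul, w_eval, w_eval]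
      simp only [h1, h2, h3, h4]
      linear_combination
        (-(e (t i * m * t j) x * ε b * ε b) - ε b * e (t i * m) x) * eps_sq a
        + (-(e (t i * m * t j) x) - ε a * e (m * t j) x) * eps_sq b
  · intro m hm
    rw [linearIndependent_iff' (R := ℂ) (v := fun p : ZMod 3 × ZMod 3 =>
      (w a b p.1 p.2 (m p.1 p.2) ⊗ₜ[ℂ] (e' p.1 ⊗ₜ[ℂ] e' p.2) :
        (G → ℂ) ⊗[ℂ] ((ZMod 3 → ℂ) ⊗[ℂ] (ZMod 3 → ℂ))))]
    intro s g hg q hq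
    obtain ⟨q1, q2⟩ := q
    have h2 := congrArg (φ (m q1 q2) q1 q2) hg
    rw [map_sum, map_zero] at h2
    simp only [map_smul, φ_tmul, smul_eq_mul] at h2
    rw [Finset.sum_eq_single_of_mem (q1, q2) hq] at h2
    · rw [w_self a b q1 q2 (m q1 q2) (hm q1 q2)] at h2
      simpa [e'] using h2
    · intro p _ hp
      have : p.1 ≠ q1 ∨ p.2 ≠ q2 := by
        by_contra hc
        push_neg at hc
        exact hp (Prod.ext hc.1 hc.2)
      rcases this with h | h
      · simp [e', if_neg (Ne.symm h)]
      · simp [e', if_neg (Ne.symm h)]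
end
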